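/- Let L be a Lindblad generator on M_d(ℂ) and G its time average. Then the range of L equals the kernel of G, the kernel of L equals the range of G, M_d(ℂ) is the direct sum of ker L and ker G, and L restricts to a linear bijection of ker G onto itself (so that L has a well-defined inverse L⁻¹ : ker G → ker G). -/

import Mathlib

open Matrix Filter
open scoped ComplexOrder

attribute [local instance] Matrix.frobeniusNormedAddCommGroup Matrix.frobeniusNormedSpace

variable {d : ℕ}

/-- The Lindblad generator built from `H` and Kraus operators `h`. -/
noncomputable def lindbladOf (H : Matrix (Fin d) (Fin d) ℂ) {n : ℕ}
    (h : Fin n → Matrix (Fin d) (Fin d) ℂ) :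
    Matrix (Fin d) (Fin d) ℂ →ₗ[ℂ] Matrix (Fin d) (Fin d) ℂ :=
  (-Complex.I) • (LinearMap.mulLeft ℂ H - LinearMap.mulRight ℂ H) +
    ∑ α, ((LinearMap.mulLeft ℂ (h α)).comp (LinearMap.mulRight ℂ (h α)ᴴ)
      - ((1 : ℂ)/2) • (LinearMap.mulLeft ℂ ((h α)ᴴ * h α) + LinearMap.mulRight ℂ ((h α)ᴴ * h α)))

/-- `L` is a Lindblad generator. -/
def IsLindblad (L : Matrix (Fin d) (Fin d) ℂ →ₗ[ℂ] Matrix (Fin d) (Fin d) ℂ) : Prop :=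
  ∃ (H : Matrix (Fin d) (Fin d) ℂ) (n : ℕ) (h : Fin n → Matrix (Fin d) (Fin d) ℂ),
    H.IsHermitian ∧ L = lindbladOf H h

/-- `exp (t L)` as a map on matrices. -/
noncomputable def expL (L : Matrix (Fin d) (Fin d) ℂ →ₗ[ℂ] Matrix (Fin d) (Fin d) ℂ) (t : ℝ) :
    Matrix (Fin d) (Fin d) ℂ →L[ℂ] Matrix (Fin d) (Fin d) ℂ :=
  haveI : IsTopologicalRing (Matrix (Fin d) (Fin d) ℂ →L[ℂ] Matrix (Fin d) (Fin d) ℂ) :=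
    @NonUnitalSeminormedRing.toIsTopologicalRing _ ContinuousLinearMap.toNormedRing.toSeminormedRing.toNonUnitalSeminormedRing
  NormedSpace.exp ((t : ℂ) • LinearMap.toContinuousLinearMap L)

/-- `G` is the time average (Cesàro mean) of the semigroup generated by `L`. -/
def IsTimeAverage (L G : Matrix (Fin d) (Fin d) ℂ →ₗ[ℂ] Matrix (Fin d) (Fin d) ℂ) : Prop :=
  ∀ X, Tendsto (fun T : ℝ => T⁻¹ • ∫ t in (0:ℝ)..T, expL L t X) atTop (nhds (G X))

/-!
Shifting the Cesàro mean shows that the time average `G` is invariant under the semigroup on both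
sides: `exp (sL) ∘ G = G = G ∘ exp (sL)`. Differentiating at `s = 0` gives `L ∘ G = 0 = G ∘ L`,
and `G` fixes `ker L` pointwise because `exp (tL)` does. In finite dimension these three identities
alone make `G` the projection onto `ker L` along `range L = ker G`, and `L` is then injective on the
complement `ker G` of its kernel.
-/

open LinearMap

section Cesaro

variable {E : Type*} [NormedAddCommGroup E] [NormedSpace ℝ E]

theorem tendsto_inv_smul_integral_comp_add_right {f : ℝ → E} {g : E} (hf : Continuous f)
    (h : Tendsto (fun T : ℝ => T⁻¹ • ∫ t in (0:ℝ)..T, f t) atTop (nhds g)) (s : ℝ) :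
    Tendsto (fun T : ℝ => T⁻¹ • ∫ t in (0:ℝ)..T, f (t + s)) atTop (nhds g) := by
  have h_shift : Tendsto (fun T : ℝ => (T + s)⁻¹ • ∫ t in (0:ℝ)..(T + s), f t) atTop (nhds g) :=
    h.comp (tendsto_atTop_add_const_right atTop s tendsto_id)
  have h_ratio : Tendsto (fun T : ℝ => T⁻¹ * (T + s)) atTop (nhds 1) := by
    have : Tendsto (fun T : ℝ => 1 + s * T⁻¹) atTop (nhds (1 + s * 0)) :=
      tendsto_const_nhds.add (tendsto_const_nhds.mul tendsto_inv_atTop_zero)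
    rw [mul_zero, add_zero] at this
    refine this.congr' ?_
    filter_upwards [eventually_ne_atTop 0] with T hT
    field_simp
  have h_tail : Tendsto (fun T : ℝ => T⁻¹ • ∫ t in (0:ℝ)..s, f t) atTop (nhds 0) := by
    simpa using (tendsto_inv_atTop_zero (𝕜 := ℝ)).smul_const (∫ t in (0:ℝ)..s, f t)
  have h_sum := (h_ratio.smul h_shift).sub h_tail
  rw [one_smul, sub_zero] at h_sum
  refine h_sum.congr' ?_
  filter_upwards [eventually_ne_atTop (-s)] with T hT
  have hTs : T + s ≠ 0 := fun h => hT (eq_neg_of_add_eq_zero_left h)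
  rw [smul_smul, mul_assoc, mul_inv_cancel₀ hTs, mul_one, ← smul_sub,
    intervalIntegral.integral_comp_add_right f s, zero_add,
    intervalIntegral.integral_interval_sub_left (hf.intervalIntegrable _ _)
      (hf.intervalIntegrable _ _)]

theorem tendsto_inv_smul_integral_const [CompleteSpace E] (c : E) :
    Tendsto (fun T : ℝ => T⁻¹ • ∫ _ in (0:ℝ)..T, c) atTop (nhds c) := by
  refine tendsto_const_nhds.congr' ?_
  filter_upwards [eventually_ne_atTop 0] with T hT
  rw [intervalIntegral.integral_const, sub_zero, smul_smul, inv_mul_cancel₀ hT, one_smul]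

end Cesaro

section MeanErgodicProjection

variable {R V : Type*} [Ring R] [AddCommGroup V] [Module R V]

structure IsMeanErgodicProjection (L G : V →ₗ[R] V) : Prop where
  map_proj_eq_zero : ∀ X, L (G X) = 0
  proj_map_eq_zero : ∀ X, G (L X) = 0
  proj_eq_self_of_map_eq_zero : ∀ X, L X = 0 → G X = X

namespace IsMeanErgodicProjection

variable {L G : V →ₗ[R] V} (hLG : IsMeanErgodicProjection L G)
include hLG

theorem ker_eq_range : ker L = range G :=
  le_antisymm (fun X hX => ⟨X, hLG.proj_eq_self_of_map_eq_zero X hX⟩)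
    (by rintro _ ⟨X, rfl⟩; exact hLG.map_proj_eq_zero X)

theorem isIdempotentElem : IsIdempotentElem G :=
  LinearMap.ext fun X => hLG.proj_eq_self_of_map_eq_zero _ (hLG.map_proj_eq_zero X)

theorem isCompl_ker : IsCompl (ker L) (ker G) :=
  hLG.ker_eq_range ▸ hLG.isIdempotentElem.isCompl

end IsMeanErgodicProjection

end MeanErgodicProjection

namespace IsMeanErgodicProjection

variable {K V : Type*} [DivisionRing K] [AddCommGroup V] [Module K V] [FiniteDimensional K V]
  {L G : V →ₗ[K] V} (hLG : IsMeanErgodicProjection L G)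
include hLG

theorem range_eq_ker : range L = ker G := by
  refine Submodule.eq_of_le_of_finrank_le ?_ ?_
  · rintro _ ⟨X, rfl⟩
    exact hLG.proj_map_eq_zero X
  · have hL := finrank_range_add_finrank_ker L
    have hG := finrank_range_add_finrank_ker G
    rw [hLG.ker_eq_range] at hL
    omega

theorem bijOn_ker : Set.BijOn L (ker G) (ker G) := by
  refine ⟨fun X _ => hLG.proj_map_eq_zero X, fun X hX Y hY hXY => ?_, fun Y hY => ?_⟩
  · have hmem : X - Y ∈ ker L ⊓ ker G :=
      ⟨by simp [hXY], sub_mem hX hY⟩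
    rw [hLG.isCompl_ker.inf_eq_bot, Submodule.mem_bot, sub_eq_zero] at hmem
    exact hmem
  · obtain ⟨X, rfl⟩ : Y ∈ range L := hLG.range_eq_ker ▸ hY
    refine ⟨X - G X, ?_, by simp [hLG.map_proj_eq_zero]⟩
    simp [hLG.proj_eq_self_of_map_eq_zero _ (hLG.map_proj_eq_zero X)]

end IsMeanErgodicProjection

section Semigroup

/- The Frobenius norm, rebundled so that its topology is syntactically the product topology of
`Matrix`: only then does instance search see the operator algebra in which `expL` takes its values
as a complete normed algebra. -/
noncomputable instance : NormedAddCommGroup (Matrix (Fin d) (Fin d) ℂ) :=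
  { (Matrix.frobeniusNormedAddCommGroup : NormedAddCommGroup (Matrix (Fin d) (Fin d) ℂ)) with
    toMetricSpace := (Matrix.frobeniusNormedAddCommGroup :
      NormedAddCommGroup (Matrix (Fin d) (Fin d) ℂ)).toMetricSpace.replaceTopology rfl }

noncomputable instance : NormedSpace ℂ (Matrix (Fin d) (Fin d) ℂ) :=
  ⟨Matrix.frobeniusNormedSpace.norm_smul_le⟩

noncomputable instance :
    NormedAlgebra ℚ (Matrix (Fin d) (Fin d) ℂ →L[ℂ] Matrix (Fin d) (Fin d) ℂ) :=
  NormedAlgebra.restrictScalars ℚ ℂ _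

variable (L : Matrix (Fin d) (Fin d) ℂ →ₗ[ℂ] Matrix (Fin d) (Fin d) ℂ) (X : Matrix (Fin d) (Fin d) ℂ)

theorem expL_zero : expL L 0 = 1 := by
  have h : ((0 : ℝ) : ℂ) • LinearMap.toContinuousLinearMap L = 0 := by
    rw [Complex.ofReal_zero]
    exact zero_smul ℂ (LinearMap.toContinuousLinearMap L)
  rw [expL, h]
  exact NormedSpace.exp_zero

theorem expL_add (s t : ℝ) : expL L (s + t) = expL L s * expL L t := by
  set A := LinearMap.toContinuousLinearMap L
  have h : ((s + t : ℝ) : ℂ) • A = (s : ℂ) • A + (t : ℂ) • A := by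
    rw [Complex.ofReal_add]
    exact add_smul (s : ℂ) (t : ℂ) A
  have hc : Commute ((s : ℂ) • A) ((t : ℂ) • A) := by
    ext X i j
    simp [mul_left_comm]
  rw [expL, expL, expL, h]
  exact NormedSpace.exp_add_of_commute hc

theorem expL_apply_expL_apply (s t : ℝ) : expL L s (expL L t X) = expL L (t + s) X := by
  rw [add_comm, expL_add]
  rfl

theorem continuous_expL_apply : Continuous fun t : ℝ => expL L t X :=
  (NormedSpace.exp_continuous.comp
    (Complex.continuous_ofReal.smul continuous_const)).clm_apply continuous_const

theorem hasDerivAt_expL (t : ℝ) :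
    HasDerivAt (expL L) (expL L t * LinearMap.toContinuousLinearMap L) t := by
  have h := (hasDerivAt_exp_smul_const (𝕂 := ℂ) (LinearMap.toContinuousLinearMap L)
    (t : ℂ)).scomp t Complex.ofRealCLM.hasDerivAt
  rw [Complex.ofRealCLM_apply, Complex.ofReal_one, one_smul] at h
  exact h

theorem hasDerivAt_expL_apply (t : ℝ) :
    HasDerivAt (fun s : ℝ => expL L s X) (expL L t (L X)) t := by
  exact ((ContinuousLinearMap.apply ℂ _ X).restrictScalars ℝ).hasFDerivAt.comp_hasDerivAt t
    (hasDerivAt_expL L t)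

theorem map_eq_zero_iff_forall_expL_apply_eq : L X = 0 ↔ ∀ t, expL L t X = X := by
  constructor
  · intro h t
    have hconst := is_const_of_deriv_eq_zero
      (fun s => (hasDerivAt_expL_apply L X s).differentiableAt)
      (fun s => by rw [(hasDerivAt_expL_apply L X s).deriv, h, map_zero])
    rw [hconst t 0, expL_zero]
    rfl
  · intro h
    have hderiv := hasDerivAt_expL_apply L X 0
    rw [funext h, expL_zero] at hderiv
    exact (hasDerivAt_const 0 X).unique hderiv |>.symm

end Semigroup

namespace IsTimeAverage

variable {L G : Matrix (Fin d) (Fin d) ℂ →ₗ[ℂ] Matrix (Fin d) (Fin d) ℂ} (hG : IsTimeAverage L G)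
include hG

theorem tendsto_comp_add_right (X : Matrix (Fin d) (Fin d) ℂ) (s : ℝ) :
    Tendsto (fun T : ℝ => T⁻¹ • ∫ t in (0:ℝ)..T, expL L (t + s) X) atTop (nhds (G X)) :=
  tendsto_inv_smul_integral_comp_add_right (continuous_expL_apply L X) (hG X) s

theorem expL_apply_map (X : Matrix (Fin d) (Fin d) ℂ) (s : ℝ) : expL L s (G X) = G X := by
  have h : Tendsto (fun T : ℝ => expL L s (T⁻¹ • ∫ t in (0:ℝ)..T, expL L t X)) atTop
      (nhds (expL L s (G X))) := ((expL L s).continuous.tendsto _).comp (hG X)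
  refine tendsto_nhds_unique (h.congr fun T => ?_) (hG.tendsto_comp_add_right X s)
  rw [(expL L s).map_smul_of_tower,
    ← (expL L s).intervalIntegral_comp_comm ((continuous_expL_apply L X).intervalIntegrable _ _)]
  simp only [expL_apply_expL_apply]

theorem map_expL_apply (X : Matrix (Fin d) (Fin d) ℂ) (s : ℝ) : G (expL L s X) = G X := by
  refine tendsto_nhds_unique ((hG _).congr fun T => ?_) (hG.tendsto_comp_add_right X s)
  simp only [expL_apply_expL_apply, add_comm s]
  -- the sides differ only in the (defeq) normed structures on matrices used to elaborate them
  rfl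

theorem map_eq_self_of_forall_expL_apply_eq {X : Matrix (Fin d) (Fin d) ℂ}
    (h : ∀ t, expL L t X = X) : G X = X := by
  refine tendsto_nhds_unique (hG X) ?_
  rw [show (fun t => expL L t X) = fun _ => X from funext h]
  exact tendsto_inv_smul_integral_const X

theorem isMeanErgodicProjection : IsMeanErgodicProjection L G where
  map_proj_eq_zero X := (map_eq_zero_iff_forall_expL_apply_eq L (G X)).2 (hG.expL_apply_map X)
  proj_map_eq_zero X := by
    have h : HasDerivAt (fun s : ℝ => G (expL L s X)) (G (expL L 0 (L X))) 0 :=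
      ((LinearMap.toContinuousLinearMap G).restrictScalars ℝ).hasFDerivAt.comp_hasDerivAt 0
        (hasDerivAt_expL_apply L X 0)
    rw [funext (hG.map_expL_apply X), expL_zero] at h
    exact (hasDerivAt_const 0 (G X)).unique h |>.symm
  proj_eq_self_of_map_eq_zero X hX :=
    hG.map_eq_self_of_forall_expL_apply_eq ((map_eq_zero_iff_forall_expL_apply_eq L X).1 hX)

end IsTimeAverage

theorem stmt8_general (d : ℕ)
    (L G : Matrix (Fin d) (Fin d) ℂ →ₗ[ℂ] Matrix (Fin d) (Fin d) ℂ)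
    (hG : IsTimeAverage L G) :
    LinearMap.range L = LinearMap.ker G ∧
    LinearMap.ker L = LinearMap.range G ∧
    IsCompl (LinearMap.ker L) (LinearMap.ker G) ∧
    Set.BijOn L (LinearMap.ker G : Set (Matrix (Fin d) (Fin d) ℂ))
      (LinearMap.ker G : Set (Matrix (Fin d) (Fin d) ℂ)) :=
  have hLG := hG.isMeanErgodicProjection
  ⟨hLG.range_eq_ker, hLG.ker_eq_range, hLG.isCompl_ker, hLG.bijOn_ker⟩

theorem stmt8 (d : ℕ) (hd : 1 ≤ d)
    (L G : Matrix (Fin d) (Fin d) ℂ →ₗ[ℂ] Matrix (Fin d) (Fin d) ℂ)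
    (hL : IsLindblad L) (hG : IsTimeAverage L G) :
    LinearMap.range L = LinearMap.ker G ∧
    LinearMap.ker L = LinearMap.range G ∧
    IsCompl (LinearMap.ker L) (LinearMap.ker G) ∧
    Set.BijOn L (LinearMap.ker G : Set (Matrix (Fin d) (Fin d) ℂ))
      (LinearMap.ker G : Set (Matrix (Fin d) (Fin d) ℂ)) :=
  stmt8_general d L G hG
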